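/- Suppose the weight functions wt and w̃t from ℤ×ℕ to a field satisfy wt(p)·(w̃t(p) − 1) = c for all p ∈ ℤ×ℕ, for some constant c. Then for every Dyck path D, wt_V(D) = Σ_{S∈φ_V^{-1}(D)} wt_Sch(c,S) and wt_HP(D) = Σ_{S∈φ_HP^{-1}(D)} wt_Sch(c,S). -/

import Mathlib

open Finset

attribute [local instance 10] Classical.propDecidable

noncomputable section

namespace Paper

/-! ### Words and permutation statistics (all words are 1-based). -/

/-- The word (one-line notation, 1-based) of a permutation of `{1, …, N}`:
`word π i = π(i)` for `1 ≤ i ≤ N`, and `0` otherwise. -/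
def word {N : ℕ} (π : Equiv.Perm (Fin N)) (i : ℕ) : ℕ :=
  if h : 1 ≤ i ∧ i ≤ N then (π ⟨i - 1, by omega⟩ : ℕ) + 1 else 0

/-- The major index of a word of length `N`: the sum of the descents. -/
def majW (N : ℕ) (w : ℕ → ℕ) : ℕ :=
  ∑ i ∈ Finset.Icc 1 (N - 1), if w (i + 1) < w i then i else 0

/-- The number of inversions of a word of length `N`. -/
def invW (N : ℕ) (w : ℕ → ℕ) : ℕ :=
  (((Finset.Icc 1 N) ×ˢ (Finset.Icc 1 N)).filter
    fun p => p.1 < p.2 ∧ w p.2 < w p.1).card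

/-- The number of descents of a word of length `m`. -/
def desW (m : ℕ) (w : ℕ → ℕ) : ℕ :=
  ((Finset.Icc 1 (m - 1)).filter fun i => w (i + 1) < w i).card

/-- The number of ascents of a word of length `m`. -/
def ascW (m : ℕ) (w : ℕ → ℕ) : ℕ :=
  ((Finset.Icc 1 (m - 1)).filter fun i => w i < w (i + 1)).card

/-- The number of non-descents of a word of length `m`. -/
def ndesW (m : ℕ) (w : ℕ → ℕ) : ℕ :=
  ((Finset.Icc 1 m).filter fun i => i = m ∨ w i < w (i + 1)).card

/-- The number of non-ascents of a word of length `m`. -/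
def nascW (m : ℕ) (w : ℕ → ℕ) : ℕ :=
  ((Finset.Icc 1 m).filter fun i => i = m ∨ ¬ w i < w (i + 1)).card

/-- `π_e = π₂π₄⋯`, the subword of even-position entries, as a 1-based word. -/
def evenWord {N : ℕ} (π : Equiv.Perm (Fin N)) (j : ℕ) : ℕ := word π (2 * j)

/-- `π_o = π₁π₃⋯`, the subword of odd-position entries, as a 1-based word. -/
def oddWord {N : ℕ} (π : Equiv.Perm (Fin N)) (j : ℕ) : ℕ := word π (2 * j - 1)

/-- A word of length `N` is alternating: `w₁ < w₂ > w₃ < w₄ > ⋯`. -/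
def IsAltW (N : ℕ) (w : ℕ → ℕ) : Prop :=
  ∀ i ∈ Finset.Icc 1 (N - 1), (i % 2 = 1 → w i < w (i + 1)) ∧ (i % 2 = 0 → w (i + 1) < w i)

/-- A word of length `N` is reverse alternating: `w₁ > w₂ < w₃ > w₄ < ⋯`. -/
def IsRaltW (N : ℕ) (w : ℕ → ℕ) : Prop :=
  ∀ i ∈ Finset.Icc 1 (N - 1), (i % 2 = 1 → w (i + 1) < w i) ∧ (i % 2 = 0 → w i < w (i + 1))

/-- `Alt_N`, the set of alternating permutations of `{1, …, N}`. -/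
def altPerms (N : ℕ) : Finset (Equiv.Perm (Fin N)) :=
  Finset.univ.filter fun π => IsAltW N (word π)

/-- `Ralt_N`, the set of reverse alternating permutations of `{1, …, N}`. -/
def raltPerms (N : ℕ) : Finset (Equiv.Perm (Fin N)) :=
  Finset.univ.filter fun π => IsRaltW N (word π)

/-- `κ_N = (1)(2,3)(4,5)⋯`, acting on the 1-based values `{1, …, N}`. -/
def kappaNat (N j : ℕ) : ℕ :=
  if j % 2 = 0 ∧ 2 ≤ j ∧ j + 1 ≤ N then j + 1
  else if j % 2 = 1 ∧ 3 ≤ j ∧ j ≤ N then j - 1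
  else j

/-- `η_N = (1,2)(3,4)⋯`, acting on the 1-based values `{1, …, N}`. -/
def etaNat (N j : ℕ) : ℕ :=
  if j % 2 = 1 ∧ j + 1 ≤ N then j + 1
  else if j % 2 = 0 ∧ 2 ≤ j ∧ j ≤ N then j - 1
  else j

/-- `maj(π⁻¹)`. -/
def majInv (N : ℕ) (π : Equiv.Perm (Fin N)) : ℕ := majW N (word π.symm)

/-- `maj(κ_N π⁻¹)`. -/
def majKappaInv (N : ℕ) (π : Equiv.Perm (Fin N)) : ℕ :=
  majW N fun i => kappaNat N (word π.symm i)

/-- `maj(η_N π⁻¹)`. -/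
def majEtaInv (N : ℕ) (π : Equiv.Perm (Fin N)) : ℕ :=
  majW N fun i => etaNat N (word π.symm i)

/-- The reversal permutation `i ↦ N + 1 - i` of `Fin N`. -/
def revPerm (N : ℕ) : Equiv.Perm (Fin N) :=
  ⟨Fin.rev, Fin.rev, fun i => Fin.rev_rev i, fun i => Fin.rev_rev i⟩

/-- `φ(π)ᵢ = (N+1) - π_{N+1-i}`. -/
def phiMap {N : ℕ} (π : Equiv.Perm (Fin N)) : Equiv.Perm (Fin N) :=
  ((revPerm N).trans π).trans (revPerm N)

/-! ### Lattice paths.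

A path with `L` unit steps is encoded by `s : Fin L → Bool` (`true` = up-step `(1,1)`,
`false` = down-step `(1,-1)`). -/

/-- The vertical displacement of the `j`-th step. -/
def stepVal {L : ℕ} (s : Fin L → Bool) (j : ℕ) : ℤ :=
  if h : j < L then (if s ⟨j, h⟩ then 1 else -1) else 0

/-- The height of the path after `i` steps. -/
def pht {L : ℕ} (s : Fin L → Bool) (i : ℕ) : ℤ := ∑ j ∈ Finset.range i, stepVal s j

/-- A Dyck path: stays (weakly) above the `x`-axis and ends at height `0`. -/
def IsDyck {L : ℕ} (s : Fin L → Bool) : Prop :=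
  (∀ i ∈ Finset.range (L + 1), 0 ≤ pht s i) ∧ pht s L = 0

/-- The Dyck paths with `L` steps. -/
def dyckPaths (L : ℕ) : Finset (Fin L → Bool) := Finset.univ.filter fun s => IsDyck s

/-- The (indices of the) valleys of a path: a down-step followed by an up-step. -/
def valleys {L : ℕ} (s : Fin L → Bool) : Finset ℕ :=
  (Finset.Icc 1 (L - 1)).filter fun i => stepVal s (i - 1) = -1 ∧ stepVal s i = 1

/-- The (indices of the) peaks of a path: an up-step followed by a down-step. -/
def peaks {L : ℕ} (s : Fin L → Bool) : Finset ℕ :=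
  (Finset.Icc 1 (L - 1)).filter fun i => stepVal s (i - 1) = 1 ∧ stepVal s i = -1

/-- The (indices of the) high peaks of a path: peaks of height at least `2`. -/
def highPeaks {L : ℕ} (s : Fin L → Bool) : Finset ℕ :=
  (peaks s).filter fun i => 2 ≤ pht s i

/-- The height over abscissa `x` of a path starting at `(-m, 0)`. -/
def aht (m : ℕ) {L : ℕ} (s : Fin L → Bool) (x : ℤ) : ℤ := pht s (x + m).toNat

/-- `D₁ < D₂`, for `D₁` starting at `(-m₁,0)` and `D₂` at `(-m₂,0)`, `m₁ ≤ m₂`: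
strictly below on the common range of abscissas. -/
def PathLT (m₁ m₂ : ℕ) {L₁ L₂ : ℕ} (s₁ : Fin L₁ → Bool) (s₂ : Fin L₂ → Bool) : Prop :=
  ∀ x ∈ Finset.Icc (-(m₁ : ℤ)) (m₁ : ℤ), aht m₁ s₁ x < aht m₂ s₂ x

/-- `D₁ ≤ D₂`: weakly below, sharing no step. -/
def PathLE (m₁ m₂ : ℕ) {L₁ L₂ : ℕ} (s₁ : Fin L₁ → Bool) (s₂ : Fin L₂ → Bool) : Prop :=
  (∀ x ∈ Finset.Icc (-(m₁ : ℤ)) (m₁ : ℤ), aht m₁ s₁ x ≤ aht m₂ s₂ x) ∧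
    ∀ x ∈ Finset.Icc (-(m₁ : ℤ)) ((m₁ : ℤ) - 1),
      ¬(aht m₁ s₁ x = aht m₂ s₂ x ∧ aht m₁ s₁ (x + 1) = aht m₂ s₂ (x + 1))

/-- The abscissas of the common lattice points of two paths. -/
def interPts (m₁ m₂ : ℕ) {L₁ L₂ : ℕ} (s₁ : Fin L₁ → Bool) (s₂ : Fin L₂ → Bool) : Finset ℤ :=
  (Finset.Icc (-(m₁ : ℤ)) (m₁ : ℤ)).filter fun x => aht m₁ s₁ x = aht m₂ s₂ x

/-- `Dyck^k_{2n}`: tuples `(D₁, …, D_k)` with `D_i ∈ Dyck((-n-2i+2,0) → (n+2i-2,0))`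
(0-based: `D_i` has half-length `n + 2i`). -/
abbrev DyckTuple (n k : ℕ) := ∀ i : Fin k, Fin (2 * (n + 2 * (i : ℕ))) → Bool

/-- The tuples `(D₁ ≤ D₂ ≤ ⋯ ≤ D_k) ∈ Dyck^k_{2n}`. -/
def weakTuples (n k : ℕ) : Finset (DyckTuple n k) :=
  Finset.univ.filter fun D =>
    (∀ i : Fin k, IsDyck (D i)) ∧
      ∀ (i : ℕ) (h : i + 1 < k),
        PathLE (n + 2 * i) (n + 2 * (i + 1)) (D ⟨i, by omega⟩) (D ⟨i + 1, h⟩)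

/-- The tuples `(D₁ < D₂ < ⋯ < D_k) ∈ Dyck^k_{2n}`. -/
def strictTuples (n k : ℕ) : Finset (DyckTuple n k) :=
  Finset.univ.filter fun D =>
    (∀ i : Fin k, IsDyck (D i)) ∧
      ∀ (i : ℕ) (h : i + 1 < k),
        PathLT (n + 2 * i) (n + 2 * (i + 1)) (D ⟨i, by omega⟩) (D ⟨i + 1, h⟩)

/-- The lattice points of a path starting at `(-m, 0)`, as a finite subset of `ℤ × ℤ`. -/
def pathPoints (m : ℕ) {L : ℕ} (s : Fin L → Bool) : Finset (ℤ × ℤ) :=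
  (Finset.range (L + 1)).image fun t : ℕ => (-(m : ℤ) + (t : ℤ), pht s t)

/-- The non-valley lattice points of a path starting at `(-m, 0)`. -/
def nonValleyPoints (m : ℕ) {L : ℕ} (s : Fin L → Bool) : Finset (ℤ × ℤ) :=
  ((Finset.range (L + 1)).filter fun t => t ∉ valleys s).image
    fun t : ℕ => (-(m : ℤ) + (t : ℤ), pht s t)

section Weights

variable {F : Type*} [Field F]

/-- The `i`-th lattice point (in `ℤ × ℕ`) of a path starting at `(a, 0)`. -/
def ptOf (a : ℤ) {L : ℕ} (s : Fin L → Bool) (i : ℕ) : ℤ × ℕ := (a + i, (pht s i).toNat)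

/-- `wt_V(D) = ∏_{p ∈ D} wt(p) · ∏_{p ∈ V(D)} w̃t(p)` for a path starting at `(a, 0)`. -/
def wtVal (wt wte : ℤ × ℕ → F) (a : ℤ) {L : ℕ} (s : Fin L → Bool) : F :=
  (∏ i ∈ Finset.range (L + 1), wt (ptOf a s i)) * ∏ i ∈ valleys s, wte (ptOf a s i)

/-- `wt_HP(D) = ∏_{p ∈ D} wt(p) · ∏_{p ∈ HP(D)} w̃t(p)` for a path starting at `(a, 0)`. -/
def wtHigh (wt wte : ℤ × ℕ → F) (a : ℤ) {L : ℕ} (s : Fin L → Bool) : F :=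
  (∏ i ∈ Finset.range (L + 1), wt (ptOf a s i)) * ∏ i ∈ highPeaks s, wte (ptOf a s i)

/-- `∏_{p ∈ D₁ ∩ D₂} f(p)`, for `D₁` starting at `(-m₁,0)` and `D₂` at `(-m₂,0)`. -/
def interProd (f : ℤ × ℕ → F) (m₁ m₂ : ℕ) {L₁ L₂ : ℕ}
    (s₁ : Fin L₁ → Bool) (s₂ : Fin L₂ → Bool) : F :=
  ∏ x ∈ interPts m₁ m₂ s₁ s₂, f (x, (aht m₁ s₁ x).toNat)

/-- The sum over `(D₁ ≤ ⋯ ≤ D_k) ∈ Dyck^k_{2n}` of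
`wt_V(D₁)⋯wt_V(D_k) ∏_{i=1}^{k-1} ∏_{p ∈ D_i ∩ D_{i+1}} (1 - w̃t(p)⁻¹)`. -/
def weakSum (wt wte : ℤ × ℕ → F) (n k : ℕ) : F :=
  ∑ D ∈ weakTuples n k,
    (∏ i : Fin k, wtVal wt wte (-(n : ℤ) - 2 * (i : ℕ)) (D i)) *
      ∏ j : Fin (k - 1),
        interProd (fun p => 1 - (wte p)⁻¹) (n + 2 * (j : ℕ)) (n + 2 * ((j : ℕ) + 1))
          (D ⟨(j : ℕ), by have := j.isLt; omega⟩)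
          (D ⟨(j : ℕ) + 1, by have := j.isLt; omega⟩)

/-- The sum over `(D₁ < ⋯ < D_k) ∈ Dyck^k_{2n}` of `wt_V(D₁)⋯wt_V(D_k)`. -/
def strictSum (wt wte : ℤ × ℕ → F) (n k : ℕ) : F :=
  ∑ D ∈ strictTuples n k, ∏ i : Fin k, wtVal wt wte (-(n : ℤ) - 2 * (i : ℕ)) (D i)

end Weights

/-! ### Schröder paths.

A path with `L` steps is encoded by `st : Fin L → Fin 3`
(`0` = up-step `(1,1)`, `1` = down-step `(1,-1)`, `2` = horizontal step `(2,0)`). -/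

/-- The horizontal displacement of the `j`-th step. -/
def stepX {L : ℕ} (st : Fin L → Fin 3) (j : ℕ) : ℕ :=
  if h : j < L then (if st ⟨j, h⟩ = 2 then 2 else 1) else 0

/-- The vertical displacement of the `j`-th step. -/
def stepY {L : ℕ} (st : Fin L → Fin 3) (j : ℕ) : ℤ :=
  if h : j < L then (if st ⟨j, h⟩ = 0 then 1 else if st ⟨j, h⟩ = 1 then -1 else 0) else 0

/-- The horizontal position (relative to the start) after `j` steps. -/
def xpos {L : ℕ} (st : Fin L → Fin 3) (j : ℕ) : ℕ := ∑ t ∈ Finset.range j, stepX st t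

/-- The height after `j` steps. -/
def ypos {L : ℕ} (st : Fin L → Fin 3) (j : ℕ) : ℤ := ∑ t ∈ Finset.range j, stepY st t

/-- A (little) Schröder path of horizontal span `2m`: nonnegative heights, ends at
height `0`, and no horizontal step on the `x`-axis. -/
def IsSch (m : ℕ) {L : ℕ} (st : Fin L → Fin 3) : Prop :=
  xpos st L = 2 * m ∧ (∀ j ∈ Finset.range (L + 1), 0 ≤ ypos st j) ∧ ypos st L = 0 ∧
    ∀ j ∈ Finset.range L, stepX st j = 2 → ypos st j ≠ 0

/-- The height of a Schröder path over the relative abscissa `x` (midpoints of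
horizontal steps get the height of that horizontal step). -/
def schHeight {L : ℕ} (st : Fin L → Fin 3) (x : ℕ) : ℤ :=
  ∑ t ∈ Finset.range L, if xpos st (t + 1) ≤ x then stepY st t else 0

/-- The relative abscissa `x` is the midpoint of a horizontal step. -/
def IsHMid {L : ℕ} (st : Fin L → Fin 3) (x : ℕ) : Prop :=
  ∃ j ∈ Finset.range L, stepX st j = 2 ∧ xpos st j + 1 = x

/-- The number of horizontal steps of a Schröder path. -/
def hsCount {L : ℕ} (st : Fin L → Fin 3) : ℕ :=
  ((Finset.range L).filter fun j => stepX st j = 2).card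

/-- `wt_Sch(c, S) = c^{hs(S)} ∏_{p ∈ S} wt(p)` for a Schröder path starting at `(a,0)`. -/
def wtSch {F : Type*} [Field F] (wt : ℤ × ℕ → F) (c : F) (a : ℤ) {L : ℕ}
    (st : Fin L → Fin 3) : F :=
  c ^ hsCount st * ∏ j ∈ Finset.range (L + 1), wt (a + xpos st j, (ypos st j).toNat)

/-- `φ_V(S) = D`: the Dyck path `D` (with `L'` steps) is obtained from the Schröder
path `S` by replacing each horizontal step by a down-step followed by an up-step. -/
def PhiVEq {L L' : ℕ} (st : Fin L → Fin 3) (s : Fin L' → Bool) : Prop :=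
  ∀ x ∈ Finset.range (L' + 1),
    pht s x = schHeight st x - (if IsHMid st x then 1 else 0)

/-- `φ_HP(S) = D`: the Dyck path `D` is obtained from the Schröder path `S` by
replacing each horizontal step by an up-step followed by a down-step. -/
def PhiHPEq {L L' : ℕ} (st : Fin L → Fin 3) (s : Fin L' → Bool) : Prop :=
  ∀ x ∈ Finset.range (L' + 1),
    pht s x = schHeight st x + (if IsHMid st x then 1 else 0)

/-! ### Young diagrams, excited and pleasant diagrams, reverse plane partitions. -/

/-- The cells (1-based, matrix coordinates) of the staircase `δ_m = (m-1, m-2, …, 1)`. -/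
def deltaCells (m : ℕ) : Finset (ℕ × ℕ) :=
  ((Finset.Icc 1 m) ×ˢ (Finset.Icc 1 m)).filter fun c => c.1 + c.2 ≤ m

/-- An excited move inside the Young diagram `lam`. -/
def ExcitedStep (lam : Finset (ℕ × ℕ)) (D D' : Finset (ℕ × ℕ)) : Prop :=
  ∃ i j : ℕ, (i, j) ∈ D ∧ (i + 1, j) ∉ D ∧ (i, j + 1) ∉ D ∧ (i + 1, j + 1) ∉ D ∧
    (i + 1, j + 1) ∈ lam ∧ D' = insert (i + 1, j + 1) (D.erase (i, j))

/-- `D` is an excited diagram of `lam/mu`. -/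
def IsExcited (lam mu D : Finset (ℕ × ℕ)) : Prop :=
  Relation.ReflTransGen (ExcitedStep lam) mu D

/-- `P` is a pleasant diagram of `lam/mu`: a subset of `lam \ D` for an excited diagram `D`. -/
def IsPleasant (lam mu : Finset (ℕ × ℕ)) (P : Finset (ℕ × ℕ)) : Prop :=
  ∃ D, IsExcited lam mu D ∧ P ⊆ lam \ D

/-- `p(lam/mu)`, the number of pleasant diagrams of `lam/mu`. -/
def pleasantCount (lam mu : Finset (ℕ × ℕ)) : ℕ :=
  Set.ncard {P : Finset (ℕ × ℕ) | IsPleasant lam mu P}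

/-- A reverse plane partition on the skew shape `shape`: a filling by nonnegative
integers (vanishing off the shape) weakly increasing along rows and columns. -/
def IsRPP (shape : Finset (ℕ × ℕ)) (f : ℕ × ℕ → ℕ) : Prop :=
  (∀ c, c ∉ shape → f c = 0) ∧
    (∀ i j : ℕ, (i, j) ∈ shape → (i, j + 1) ∈ shape → f (i, j) ≤ f (i, j + 1)) ∧
    ∀ i j : ℕ, (i, j) ∈ shape → (i + 1, j) ∈ shape → f (i, j) ≤ f (i + 1, j)

/-- `∑_{π ∈ RPP(shape)} q^{|π|}` as a formal power series in `q`. -/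
def rppGF (shape : Finset (ℕ × ℕ)) : PowerSeries ℚ :=
  PowerSeries.mk fun N =>
    (Set.ncard {f : ℕ × ℕ → ℕ | IsRPP shape f ∧ ∑ c ∈ shape, f c = N} : ℚ)

/-- `(q; q)_m = ∏_{i=1}^m (1 - q^i)` as a formal power series. -/
def pochPS (m : ℕ) : PowerSeries ℚ :=
  ∏ i ∈ Finset.Icc 1 m, (1 - (PowerSeries.X : PowerSeries ℚ) ^ i)

/-- `E*_N(q) = ∑_{π ∈ Alt_N} q^{maj(κ_N π⁻¹)}` as a formal power series. -/
def EstarPS (N : ℕ) : PowerSeries ℚ :=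
  ∑ π ∈ altPerms N, (PowerSeries.X : PowerSeries ℚ) ^ majKappaInv N π

/-- `E*_m(q)/(q;q)_m` for `m ≥ 0`, and `0` for `m < 0`. -/
def EstarEntry (m : ℤ) : PowerSeries ℚ :=
  if m < 0 then 0 else EstarPS m.toNat * (pochPS m.toNat)⁻¹

/-- The Gaussian binomial coefficient `[N choose M]_q` as a formal power series. -/
def gaussPS (N M : ℕ) : PowerSeries ℚ :=
  pochPS N * (pochPS M * pochPS (N - M))⁻¹

/-! Since `wt p * w̃t p = c + wt p`, expanding `∏_{p ∈ D} wt p · ∏_{p ∈ V(D)} w̃t p` over the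
subsets `T ⊆ V(D)` gives `∑_T c^{|T|} ∏_{p ∈ D \ T} wt p`. The Schröder paths `S` with
`φ_V(S) = D` correspond to these subsets: `T` is the set of midpoints of the horizontal steps
of `S`, and `S` is recovered from `D` by merging the down and up step around each valley in `T`
into one horizontal step. The lattice points of `S` are then those of `D` outside `T`, and
`hs(S) = |T|`, so the term of `T` is `wt_Sch(c, S)`. High peaks and `φ_HP` work the same way,
with the horizontal step one level below the peak instead of one level above the valley. -/

theorem prod_mul_prod_eq_sum_powerset {ι R : Type*} [CommRing R] [DecidableEq ι]
    {s C : Finset ι} (hC : C ⊆ s) {w w' : ι → R} {c : R}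
    (h : ∀ i ∈ C, w i * (w' i - 1) = c) :
    (∏ i ∈ s, w i) * ∏ i ∈ C, w' i = ∑ T ∈ C.powerset, c ^ #T * ∏ i ∈ s \ T, w i := by
  have hww' : ∀ i ∈ C, w i * w' i = c + w i := fun i hi => by linear_combination h i hi
  calc (∏ i ∈ s, w i) * ∏ i ∈ C, w' i
      = (∏ i ∈ s \ C, w i) * ∏ i ∈ C, (c + w i) := by
        rw [← prod_sdiff hC, mul_assoc, ← prod_mul_distrib, prod_congr rfl hww']
    _ = ∑ T ∈ C.powerset, c ^ #T * ∏ i ∈ (s \ C) ∪ (C \ T), w i := by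
        rw [prod_add, mul_sum]
        refine sum_congr rfl fun T _ => ?_
        rw [prod_const, prod_union (sdiff_disjoint.mono_right sdiff_subset)]
        ring
    _ = _ := sum_congr rfl fun T hT => by
        rw [sdiff_union_sdiff_cancel hC (mem_powerset.mp hT)]

lemma pht_succ {L : ℕ} (s : Fin L → Bool) (i : ℕ) : pht s (i + 1) = pht s i + stepVal s i :=
  sum_range_succ _ _

lemma stepVal_eq_one_or_neg_one {L : ℕ} (s : Fin L → Bool) {i : ℕ} (hi : i < L) :
    stepVal s i = 1 ∨ stepVal s i = -1 := by
  unfold stepVal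
  split_ifs <;> simp

/-- The points where a horizontal step at height `pht s x + ε` can stand in for the two steps
around `x`: the valleys of a Dyck path for `ε = 1`, its high peaks for `ε = -1`. -/
def corners {L : ℕ} (s : Fin L → Bool) (ε : ℤ) : Finset ℕ :=
  (Icc 1 (L - 1)).filter fun x =>
    pht s (x - 1) = pht s x + ε ∧ pht s (x + 1) = pht s x + ε ∧ 1 ≤ pht s x + ε

lemma mem_corners {L : ℕ} {s : Fin L → Bool} {ε : ℤ} {x : ℕ} :
    x ∈ corners s ε ↔ 1 ≤ x ∧ x + 1 ≤ L ∧
      pht s (x - 1) = pht s x + ε ∧ pht s (x + 1) = pht s x + ε ∧ 1 ≤ pht s x + ε := by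
  simp only [corners, mem_filter, mem_Icc]
  constructor
  · rintro ⟨⟨h₁, h₂⟩, h₃⟩
    exact ⟨h₁, by omega, h₃⟩
  · rintro ⟨h₁, h₂, h₃⟩
    exact ⟨⟨h₁, by omega⟩, h₃⟩

lemma corners_subset_range {L : ℕ} (s : Fin L → Bool) (ε : ℤ) : corners s ε ⊆ range L :=
  fun _ hx => mem_range.mpr (by have := mem_corners.mp hx; omega)

lemma zero_notMem_corners {L : ℕ} (s : Fin L → Bool) (ε : ℤ) : 0 ∉ corners s ε :=
  fun h => by have := mem_corners.mp h; omega

lemma corners_one {L : ℕ} {s : Fin L → Bool} (hs : IsDyck s) : corners s 1 = valleys s := by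
  ext x
  simp only [corners, valleys, mem_filter, mem_Icc, and_congr_right_iff]
  rintro ⟨hx, hxL⟩
  obtain ⟨y, rfl⟩ : ∃ y, x = y + 1 := ⟨x - 1, by omega⟩
  have h₁ := pht_succ s y
  have h₂ := pht_succ s (y + 1)
  have h₀ := hs.1 (y + 1) (mem_range.mpr (by omega))
  simp only [add_tsub_cancel_right]
  omega

lemma corners_neg_one {L : ℕ} (s : Fin L → Bool) : corners s (-1) = highPeaks s := by
  ext x
  simp only [corners, highPeaks, peaks, mem_filter, mem_Icc]
  rcases Nat.eq_zero_or_pos x with rfl | hx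
  · simp
  obtain ⟨y, rfl⟩ : ∃ y, x = y + 1 := ⟨x - 1, by omega⟩
  have h₁ := pht_succ s y
  have h₂ := pht_succ s (y + 1)
  simp only [add_tsub_cancel_right]
  omega

lemma add_one_notMem_corners {L : ℕ} {s : Fin L → Bool} {ε : ℤ} {x : ℕ}
    (hx : x ∈ corners s ε) : x + 1 ∉ corners s ε := by
  intro hx'
  rw [mem_corners] at hx hx'
  rcases stepVal_eq_one_or_neg_one s (show x < L by omega) with h | h <;>
    · have := pht_succ s x
      simp only [add_tsub_cancel_right] at hx'
      omega

section ComplementEnumeration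

variable {T : Finset ℕ}

lemma infinite_setOf_notMem (T : Finset ℕ) : {x : ℕ | x ∉ T}.Infinite :=
  T.finite_toSet.infinite_compl

lemma nth_notMem_strictMono (T : Finset ℕ) : StrictMono (Nat.nth (· ∉ T)) :=
  Nat.nth_strictMono (infinite_setOf_notMem T)

lemma nth_notMem_notMem (j : ℕ) : Nat.nth (· ∉ T) j ∉ T :=
  Nat.nth_mem_of_infinite (infinite_setOf_notMem T) j

lemma nth_notMem_succ (hT : ∀ x ∈ T, x + 1 ∉ T) (j : ℕ) :
    Nat.nth (· ∉ T) (j + 1) =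
      if Nat.nth (· ∉ T) j + 1 ∈ T then Nat.nth (· ∉ T) j + 2 else Nat.nth (· ∉ T) j + 1 := by
  set x := Nat.nth (· ∉ T) j
  have hcount : Nat.count (· ∉ T) (x + 1) = j + 1 := by
    rw [Nat.count_succ, Nat.count_nth_of_infinite (infinite_setOf_notMem T),
      if_pos (nth_notMem_notMem j)]
  split_ifs with hx
  · have hx2 : x + 2 ∉ T := hT _ hx
    have hcount₂ : Nat.count (· ∉ T) (x + 2) = j + 1 := by
      rw [Nat.count_succ, hcount, if_neg (not_not.mpr hx), add_zero]
    rw [← hcount₂, Nat.nth_count (p := (· ∉ T)) hx2]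
  · rw [← hcount, Nat.nth_count (p := (· ∉ T)) hx]

lemma count_notMem_eq (n : ℕ) (hT : T ⊆ range n) : Nat.count (· ∉ T) n = n - #T := by
  rw [Nat.count_eq_card_filter_range, filter_not, filter_mem_eq_inter,
    inter_eq_right.mpr hT, card_sdiff_of_subset hT, card_range]

end ComplementEnumeration

section SchroederPath

variable {L : ℕ} (st : Fin L → Fin 3)

lemma xpos_succ (j : ℕ) : xpos st (j + 1) = xpos st j + stepX st j := sum_range_succ _ _

lemma ypos_succ (j : ℕ) : ypos st (j + 1) = ypos st j + stepY st j := sum_range_succ _ _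

lemma stepX_of_lt {j : ℕ} (hj : j < L) : stepX st j = if st ⟨j, hj⟩ = 2 then 2 else 1 :=
  dif_pos hj

lemma stepY_of_lt {j : ℕ} (hj : j < L) :
    stepY st j = if st ⟨j, hj⟩ = 0 then 1 else if st ⟨j, hj⟩ = 1 then -1 else 0 :=
  dif_pos hj

lemma stepX_eq_one_of_ne_two {j : ℕ} (hj : j < L) (h : stepX st j ≠ 2) : stepX st j = 1 := by
  rw [stepX_of_lt st hj] at h ⊢
  split_ifs at h ⊢ <;> simp_all

lemma stepY_eq_zero_of_stepX_eq_two {j : ℕ} (hj : j < L) (h : stepX st j = 2) :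
    stepY st j = 0 := by
  rw [stepX_of_lt st hj] at h
  rw [stepY_of_lt st hj]
  split_ifs at h ⊢ <;> simp_all

lemma xpos_mono : Monotone (xpos st) := fun _ _ hij =>
  sum_le_sum_of_subset (range_subset_range.mpr hij)

lemma xpos_strictMonoOn : StrictMonoOn (xpos st) (Set.Iic L) :=
  strictMonoOn_Iic_of_lt_succ fun j hj => by
    rw [Order.succ_eq_add_one, xpos_succ, stepX_of_lt st hj]
    split_ifs <;> omega

lemma xpos_eq_add_hsCount : xpos st L = L + hsCount st := by
  have hstep : ∀ j ∈ range L, stepX st j = 1 + if stepX st j = 2 then 1 else 0 := fun j hj => by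
    rw [stepX_of_lt st (mem_range.mp hj)]
    split_ifs <;> simp_all
  rw [xpos, hsCount, card_filter, sum_congr rfl hstep, sum_add_distrib, sum_const, card_range,
    smul_eq_mul, mul_one]

lemma schHeight_eq_ypos {j x : ℕ} (hj : j ≤ L) (hx : xpos st j ≤ x)
    (hx' : j < L → x < xpos st (j + 1)) : schHeight st x = ypos st j := by
  have hbefore : ∀ t ∈ range j, (if xpos st (t + 1) ≤ x then stepY st t else 0) = stepY st t :=
    fun t ht => if_pos ((xpos_mono st (mem_range.mp ht)).trans hx)
  have hafter : ∀ t ∈ Ico j L, (if xpos st (t + 1) ≤ x then stepY st t else 0) = 0 := by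
    intro t ht
    rw [mem_Ico] at ht
    have := xpos_mono st (show j + 1 ≤ t + 1 by omega)
    exact if_neg (by have := hx' (by omega); omega)
  rw [schHeight, ypos, ← sum_range_add_sum_Ico _ hj, sum_congr rfl hbefore,
    sum_eq_zero hafter, add_zero]

lemma schHeight_xpos {j : ℕ} (hj : j ≤ L) : schHeight st (xpos st j) = ypos st j :=
  schHeight_eq_ypos st hj le_rfl fun hj' =>
    xpos_strictMonoOn st (Set.mem_Iic.mpr hj) (Set.mem_Iic.mpr hj') (Nat.lt_succ_self j)

lemma schHeight_xpos_add_one {j : ℕ} (hj : j < L) (h2 : stepX st j = 2) :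
    schHeight st (xpos st j + 1) = ypos st j :=
  schHeight_eq_ypos st hj.le (Nat.le_succ _) fun _ => by rw [xpos_succ, h2]; omega

lemma xpos_ne_of_isHMid {x : ℕ} (hx : IsHMid st x) (j : ℕ) : xpos st j ≠ x := by
  obtain ⟨i, -, h2, rfl⟩ := hx
  rcases le_or_gt j i with hji | hij
  · have := xpos_mono st hji
    omega
  · have := xpos_mono st (Nat.succ_le_of_lt hij)
    rw [xpos_succ, h2] at this
    omega

def hMidpoints : Finset ℕ :=
  ((range L).filter fun j => stepX st j = 2).image fun j => xpos st j + 1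

lemma mem_hMidpoints {x : ℕ} : x ∈ hMidpoints st ↔ IsHMid st x := by
  simp [hMidpoints, IsHMid, and_assoc]

lemma card_hMidpoints : #(hMidpoints st) = hsCount st := by
  refine card_image_of_injOn fun i hi j hj hij => ?_
  simp only [coe_filter, mem_range, Set.mem_ofPred_eq] at hi hj
  exact (xpos_strictMonoOn st).injOn (Set.mem_Iic.mpr hi.1.le) (Set.mem_Iic.mpr hj.1.le)
    (Nat.add_right_cancel hij)

variable {st}

lemma heq_of_xpos_of_ypos {L' : ℕ} {st' : Fin L' → Fin 3} (hL : L = L')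
    (hx : ∀ j ≤ L, xpos st j = xpos st' j) (hy : ∀ j ≤ L, ypos st j = ypos st' j) :
    st ≍ st' := by
  subst hL
  refine heq_of_eq (funext fun ⟨j, hj⟩ => ?_)
  have hX : stepX st j = stepX st' j := by
    have := xpos_succ st j
    have := xpos_succ st' j
    have := hx j hj.le
    have := hx (j + 1) hj
    omega
  have hY : stepY st j = stepY st' j := by
    have := ypos_succ st j
    have := ypos_succ st' j
    have := hy j hj.le
    have := hy (j + 1) hj
    omega
  rw [stepX_of_lt st hj, stepX_of_lt st' hj] at hX
  rw [stepY_of_lt st hj, stepY_of_lt st' hj] at hY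
  generalize st ⟨j, hj⟩ = a, st' ⟨j, hj⟩ = b at hX hY
  fin_cases a <;> fin_cases b <;> simp_all

end SchroederPath

/-- `PhiEq 1 st s` says `φ_V(st) = s`, and `PhiEq (-1) st s` says `φ_HP(st) = s`. -/
def PhiEq (ε : ℤ) {L L' : ℕ} (st : Fin L → Fin 3) (s : Fin L' → Bool) : Prop :=
  ∀ x ∈ range (L' + 1), pht s x = schHeight st x - if IsHMid st x then ε else 0

lemma phiVEq_iff_phiEq {L L' : ℕ} {st : Fin L → Fin 3} {s : Fin L' → Bool} :
    PhiVEq st s ↔ PhiEq 1 st s :=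
  Iff.rfl

lemma phiHPEq_iff_phiEq {L L' : ℕ} {st : Fin L → Fin 3} {s : Fin L' → Bool} :
    PhiHPEq st s ↔ PhiEq (-1) st s :=
  forall₂_congr fun _ _ => by split_ifs <;> simp [sub_eq_add_neg]

/-- The `j`-th step of `mergeSteps s T` starts at the `j`-th point of `s` outside `T`; it is
horizontal if the next point is in `T` and copies the step of `s` otherwise. -/
def mergeSteps {L : ℕ} (s : Fin L → Bool) (T : Finset ℕ) : Fin (L - #T) → Fin 3 :=
  fun j => if Nat.nth (· ∉ T) j + 1 ∈ T then 2
    else if stepVal s (Nat.nth (· ∉ T) j) = 1 then 0 else 1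

lemma stepX_mergeSteps {L : ℕ} (s : Fin L → Bool) (T : Finset ℕ) {j : ℕ} (hj : j < L - #T) :
    stepX (mergeSteps s T) j = if Nat.nth (· ∉ T) j + 1 ∈ T then 2 else 1 := by
  rw [stepX_of_lt _ hj, mergeSteps]
  split_ifs <;> simp_all

section MergeSteps

variable {m : ℕ} {s : Fin (2 * m) → Bool} {ε : ℤ} {T : Finset ℕ} (hT : T ⊆ corners s ε)
include hT

lemma nth_notMem_sub_card : Nat.nth (· ∉ T) (2 * m - #T) = 2 * m := by
  have h2m : 2 * m ∉ T := fun h => by have := mem_corners.mp (hT h); omega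
  rw [← count_notMem_eq _ (hT.trans (corners_subset_range s ε)), Nat.nth_count h2m]

lemma nth_notMem_zero_of_subset_corners : Nat.nth (· ∉ T) 0 = 0 :=
  Nat.nth_zero_of_zero fun h => zero_notMem_corners s ε (hT h)

lemma nth_notMem_le {j : ℕ} (hj : j ≤ 2 * m - #T) : Nat.nth (· ∉ T) j ≤ 2 * m :=
  nth_notMem_sub_card hT ▸ (nth_notMem_strictMono T).monotone hj

lemma nth_notMem_lt {j : ℕ} (hj : j < 2 * m - #T) : Nat.nth (· ∉ T) j < 2 * m :=
  nth_notMem_sub_card hT ▸ nth_notMem_strictMono T hj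

lemma exists_nth_notMem_eq {x : ℕ} (hx : x ∉ T) (hx' : x ≤ 2 * m) :
    ∃ j ≤ 2 * m - #T, Nat.nth (· ∉ T) j = x :=
  ⟨Nat.count (· ∉ T) x, by
    rw [← (nth_notMem_strictMono T).le_iff_le, Nat.nth_count hx, nth_notMem_sub_card hT]
    exact hx', Nat.nth_count hx⟩

lemma nth_notMem_succ_of_subset_corners (j : ℕ) :
    Nat.nth (· ∉ T) (j + 1) =
      if Nat.nth (· ∉ T) j + 1 ∈ T then Nat.nth (· ∉ T) j + 2 else Nat.nth (· ∉ T) j + 1 :=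
  nth_notMem_succ (fun _ hx hx' => add_one_notMem_corners (hT hx) (hT hx')) j

lemma stepY_mergeSteps {j : ℕ} (hj : j < 2 * m - #T) :
    stepY (mergeSteps s T) j =
      if Nat.nth (· ∉ T) j + 1 ∈ T then 0 else stepVal s (Nat.nth (· ∉ T) j) := by
  have := stepVal_eq_one_or_neg_one s (nth_notMem_lt hT hj)
  rw [stepY_of_lt _ hj, mergeSteps]
  split_ifs <;> simp_all

lemma xpos_mergeSteps {j : ℕ} (hj : j ≤ 2 * m - #T) :
    xpos (mergeSteps s T) j = Nat.nth (· ∉ T) j := by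
  induction j with
  | zero => exact (nth_notMem_zero_of_subset_corners hT).symm
  | succ j ih =>
    rw [xpos_succ, ih (by omega), stepX_mergeSteps s T (by omega),
      nth_notMem_succ_of_subset_corners hT]
    split_ifs <;> rfl

lemma ypos_mergeSteps {j : ℕ} (hj : j ≤ 2 * m - #T) :
    ypos (mergeSteps s T) j = pht s (Nat.nth (· ∉ T) j) := by
  induction j with
  | zero => simp [ypos, pht, nth_notMem_zero_of_subset_corners hT]
  | succ j ih =>
    rw [ypos_succ, ih (by omega), stepY_mergeSteps hT (by omega),
      nth_notMem_succ_of_subset_corners hT]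
    split_ifs with hx
    · have := mem_corners.mp (hT hx)
      simp_all
    · rw [pht_succ]

lemma isSch_mergeSteps (hs : IsDyck s) : IsSch m (mergeSteps s T) := by
  refine ⟨?_, fun j hj => ?_, ?_, fun j hj h2 => ?_⟩
  · rw [xpos_mergeSteps hT le_rfl, nth_notMem_sub_card hT]
  · have hj : j ≤ 2 * m - #T := Nat.lt_succ_iff.mp (mem_range.mp hj)
    rw [ypos_mergeSteps hT hj]
    exact hs.1 _ (mem_range.mpr (Nat.lt_succ_of_le (nth_notMem_le hT hj)))
  · rw [ypos_mergeSteps hT le_rfl, nth_notMem_sub_card hT, hs.2]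
  · have hj := mem_range.mp hj
    rw [stepX_mergeSteps s T hj] at h2
    have hx : Nat.nth (· ∉ T) j + 1 ∈ T := by
      by_contra hx
      simp [hx] at h2
    have := mem_corners.mp (hT hx)
    rw [ypos_mergeSteps hT hj.le]
    simp only [add_tsub_cancel_right] at this
    omega

lemma hMidpoints_mergeSteps : hMidpoints (mergeSteps s T) = T := by
  ext x
  simp only [hMidpoints, mem_image, mem_filter, mem_range]
  constructor
  · rintro ⟨j, ⟨hj, h2⟩, rfl⟩
    rw [stepX_mergeSteps s T hj] at h2
    rw [xpos_mergeSteps hT hj.le]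
    by_contra hx
    simp [hx] at h2
  · intro hx
    have hx₁ := mem_corners.mp (hT hx)
    have hx' : x - 1 ∉ T := fun h =>
      add_one_notMem_corners (hT h) (by rw [Nat.sub_add_cancel hx₁.1]; exact hT hx)
    obtain ⟨j, hj, hjx⟩ := exists_nth_notMem_eq hT hx' (by omega)
    have hj' : j < 2 * m - #T := by
      rw [← (nth_notMem_strictMono T).lt_iff_lt, hjx, nth_notMem_sub_card hT]
      omega
    refine ⟨j, ⟨hj', ?_⟩, ?_⟩
    · rw [stepX_mergeSteps s T hj', hjx, Nat.sub_add_cancel hx₁.1, if_pos hx]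
    · rw [xpos_mergeSteps hT hj, hjx, Nat.sub_add_cancel hx₁.1]

lemma hsCount_mergeSteps : hsCount (mergeSteps s T) = #T := by
  rw [← card_hMidpoints, hMidpoints_mergeSteps hT]

lemma phiEq_mergeSteps : PhiEq ε (mergeSteps s T) s := by
  intro x hx
  have hx := Nat.lt_succ_iff.mp (mem_range.mp hx)
  have hmid : IsHMid (mergeSteps s T) x ↔ x ∈ T := by
    rw [← mem_hMidpoints, hMidpoints_mergeSteps hT]
  by_cases hxT : x ∈ T
  · obtain ⟨j, hj, h2, rfl⟩ := hmid.mpr hxT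
    have hj := mem_range.mp hj
    have := mem_corners.mp (hT hxT)
    rw [if_pos (hmid.mpr hxT), schHeight_xpos_add_one _ hj h2, ypos_mergeSteps hT hj.le,
      ← xpos_mergeSteps hT hj.le]
    simp only [add_tsub_cancel_right] at this
    omega
  · obtain ⟨j, hj, rfl⟩ := exists_nth_notMem_eq hT hxT hx
    rw [if_neg (mt hmid.mp hxT), sub_zero, ← xpos_mergeSteps hT hj, schHeight_xpos _ hj,
      ypos_mergeSteps hT hj, xpos_mergeSteps hT hj]

lemma wtSch_mergeSteps {F : Type*} [Field F] (wt : ℤ × ℕ → F) (c : F) (a : ℤ) :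
    wtSch wt c a (mergeSteps s T) = c ^ #T * ∏ x ∈ range (2 * m + 1) \ T, wt (ptOf a s x) := by
  rw [wtSch, hsCount_mergeSteps hT]
  congr 1
  refine prod_nbij (Nat.nth (· ∉ T)) (fun j hj => ?_) (nth_notMem_strictMono T).injective.injOn
    (fun x hx => ?_) (fun j hj => ?_)
  · have hj := Nat.lt_succ_iff.mp (mem_range.mp hj)
    exact mem_sdiff.mpr ⟨mem_range.mpr (Nat.lt_succ_of_le (nth_notMem_le hT hj)),
      nth_notMem_notMem j⟩
  · obtain ⟨hx, hxT⟩ := mem_sdiff.mp (mem_coe.mp hx)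
    obtain ⟨j, hj, rfl⟩ := exists_nth_notMem_eq hT hxT (Nat.lt_succ_iff.mp (mem_range.mp hx))
    exact ⟨j, mem_coe.mpr (mem_range.mpr (Nat.lt_succ_of_le hj)), rfl⟩
  · have hj := Nat.lt_succ_iff.mp (mem_range.mp hj)
    rw [xpos_mergeSteps hT hj, ypos_mergeSteps hT hj]
    rfl

end MergeSteps

section Reconstruction

variable {m : ℕ} {s : Fin (2 * m) → Bool} {ε : ℤ} {L : ℕ} {st : Fin L → Fin 3}

lemma length_eq_sub_card_hMidpoints (hst : IsSch m st) : L = 2 * m - #(hMidpoints st) := by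
  have := xpos_eq_add_hsCount st
  rw [hst.1, ← card_hMidpoints] at this
  omega

variable (hst : IsSch m st) (hφ : PhiEq ε st s)
include hst hφ

lemma pht_xpos {j : ℕ} (hj : j ≤ L) : pht s (xpos st j) = ypos st j := by
  have h := hφ (xpos st j) (mem_range.mpr (Nat.lt_succ_of_le (hst.1 ▸ xpos_mono st hj)))
  rwa [if_neg fun hx => xpos_ne_of_isHMid st hx j rfl, sub_zero, schHeight_xpos st hj] at h

lemma hMidpoints_subset_corners : hMidpoints st ⊆ corners s ε := by
  intro x hx
  obtain ⟨j, hj, h2, rfl⟩ := (mem_hMidpoints st).mp hx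
  have hj := mem_range.mp hj
  have hnext : xpos st (j + 1) = xpos st j + 1 + 1 := by rw [xpos_succ, h2]
  have hend : xpos st (j + 1) ≤ 2 * m := hst.1 ▸ xpos_mono st hj
  have hmid := hφ (xpos st j + 1) (mem_range.mpr (by omega))
  rw [if_pos ((mem_hMidpoints st).mp hx), schHeight_xpos_add_one st hj h2] at hmid
  have hleft := pht_xpos hst hφ hj.le
  have hright := pht_xpos hst hφ hj
  rw [hnext, ypos_succ, stepY_eq_zero_of_stepX_eq_two st hj h2] at hright
  have hpos := hst.2.1 j (mem_range.mpr (by omega))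
  have hne := hst.2.2.2 j (mem_range.mpr hj) h2
  rw [mem_corners]
  simp only [add_tsub_cancel_right]
  omega

lemma xpos_eq_nth_notMem_hMidpoints {j : ℕ} (hj : j ≤ L) :
    xpos st j = Nat.nth (· ∉ hMidpoints st) j := by
  induction j with
  | zero => exact (nth_notMem_zero_of_subset_corners (hMidpoints_subset_corners hst hφ)).symm
  | succ j ih =>
    have hT := hMidpoints_subset_corners hst hφ
    rw [xpos_succ, nth_notMem_succ (fun _ hx hx' => add_one_notMem_corners (hT hx) (hT hx')),
      ← ih (by omega)]
    by_cases h2 : stepX st j = 2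
    · rw [if_pos ((mem_hMidpoints st).mpr ⟨j, mem_range.mpr (by omega), h2, rfl⟩), h2]
    · have h1 := stepX_eq_one_of_ne_two st (by omega) h2
      rw [if_neg fun hx => xpos_ne_of_isHMid st ((mem_hMidpoints st).mp hx) (j + 1)
        (by rw [xpos_succ, h1]), h1]

lemma mergeSteps_hMidpoints : mergeSteps s (hMidpoints st) ≍ st := by
  have hT := hMidpoints_subset_corners hst hφ
  have hL := length_eq_sub_card_hMidpoints hst
  refine heq_of_xpos_of_ypos hL.symm (fun j hj => ?_) fun j hj => ?_
  · rw [xpos_mergeSteps hT hj, xpos_eq_nth_notMem_hMidpoints hst hφ (hL ▸ hj)]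
  · rw [ypos_mergeSteps hT hj, ← xpos_eq_nth_notMem_hMidpoints hst hφ (hL ▸ hj),
      pht_xpos hst hφ (hL ▸ hj)]

end Reconstruction

theorem sum_wtSch_of_phiEq {F : Type*} [Field F] (wt : ℤ × ℕ → F) (c : F) (a : ℤ) {m : ℕ}
    {s : Fin (2 * m) → Bool} (hs : IsDyck s) (ε : ℤ) :
    ∑ S ∈ univ.filter (fun S : Σ L : Fin (2 * m + 1), (Fin (L : ℕ) → Fin 3) =>
        IsSch m S.2 ∧ PhiEq ε S.2 s), wtSch wt c a S.2 =
      ∑ T ∈ (corners s ε).powerset, c ^ #T * ∏ x ∈ range (2 * m + 1) \ T, wt (ptOf a s x) := by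
  symm
  refine sum_nbij' (fun T => ⟨⟨2 * m - #T, by omega⟩, mergeSteps s T⟩) (fun S => hMidpoints S.2)
    (fun T hT => ?_) (fun S hS => ?_) (fun T hT => ?_) (fun S hS => ?_) (fun T hT => ?_)
  · rw [mem_powerset] at hT
    exact mem_filter.mpr ⟨mem_univ _, isSch_mergeSteps hT hs, phiEq_mergeSteps hT⟩
  · obtain ⟨-, hst, hφ⟩ := mem_filter.mp hS
    exact mem_powerset.mpr (hMidpoints_subset_corners hst hφ)
  · exact hMidpoints_mergeSteps (mem_powerset.mp hT)
  · obtain ⟨-, hst, hφ⟩ := mem_filter.mp hS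
    exact Sigma.ext (Fin.ext (length_eq_sub_card_hMidpoints hst).symm)
      (mergeSteps_hMidpoints hst hφ)
  · exact (wtSch_mergeSteps (mem_powerset.mp hT) wt c a).symm

theorem statement_11 {F : Type*} [Field F] (wt wte : ℤ × ℕ → F) (c : F)
    (h : ∀ p, wt p * (wte p - 1) = c) (a : ℤ) (m : ℕ)
    (s : Fin (2 * m) → Bool) (hs : IsDyck s) :
    wtVal wt wte a s =
        (∑ S ∈ (Finset.univ.filter
            fun S : (Σ L : Fin (2 * m + 1), (Fin (L : ℕ) → Fin 3)) =>
              IsSch m S.2 ∧ PhiVEq S.2 s),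
          wtSch wt c a S.2) ∧
      wtHigh wt wte a s =
        ∑ S ∈ (Finset.univ.filter
            fun S : (Σ L : Fin (2 * m + 1), (Fin (L : ℕ) → Fin 3)) =>
              IsSch m S.2 ∧ PhiHPEq S.2 s),
          wtSch wt c a S.2 := by
  have hexpand (ε : ℤ) := prod_mul_prod_eq_sum_powerset
    ((corners_subset_range s ε).trans (range_subset_range.mpr (Nat.le_succ _)))
    (w := fun x => wt (ptOf a s x)) (w' := fun x => wte (ptOf a s x)) fun x _ => h _
  constructor
  · rw [wtVal, ← corners_one hs, hexpand, ← sum_wtSch_of_phiEq wt c a hs]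
    simp only [phiVEq_iff_phiEq]
  · rw [wtHigh, ← corners_neg_one, hexpand, ← sum_wtSch_of_phiEq wt c a hs]
    simp only [phiHPEq_iff_phiEq]

end Paper
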